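/- Let K be a field, m ≥ 1, s ∈ ℤ^m, let P1 ∈ K[X]^{m×m} be nonsingular and s-reduced with s-row degree t = rdeg_s(P1), and let P2 ∈ K[X]^{m×m} be nonsingular and t-reduced. Then rdeg_s(P2·P1) = rdeg_t(P2) and lm_s(P2·P1) = lm_t(P2)·lm_s(P1). -/

import Mathlib

open Polynomial Matrix

/-- Degree of a polynomial as an element of `WithBot ℤ`, with `degZ 0 = ⊥`. -/
noncomputable def degZ {K : Type*} [Field K] (p : Polynomial K) : WithBot ℤ :=
  p.degree.map (fun n : ℕ => (n : ℤ))

/-- The `s`-degree of a row vector `p`: `max_j (deg p_j + s_j)`. -/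
noncomputable def sdeg {K : Type*} [Field K] {ι : Type*} [Fintype ι]
    (s : ι → ℤ) (p : ι → Polynomial K) : WithBot ℤ :=
  Finset.univ.sup fun j => degZ (p j) + (s j : WithBot ℤ)

/-- `j` is the `s`-pivot index of the row `p`: the largest index at which the
`s`-degree of `p` is attained. -/
def IsPivotIndex {K : Type*} [Field K] {ι : Type*} [Fintype ι] [LinearOrder ι]
    (s : ι → ℤ) (p : ι → Polynomial K) (j : ι) : Prop :=
  degZ (p j) + (s j : WithBot ℤ) = sdeg s p ∧
    ∀ k, j < k → degZ (p k) + (s k : WithBot ℤ) ≠ sdeg s p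

/-- `P` is in `s`-Popov form: it is nonsingular, the `s`-pivot entries are monic and
on the diagonal, and in each column the nonpivot entries have degree less than
the pivot entry. -/
def IsPopov {K : Type*} [Field K] {m : ℕ} (s : Fin m → ℤ)
    (P : Matrix (Fin m) (Fin m) (Polynomial K)) : Prop :=
  P.det ≠ 0 ∧ (∀ i, IsPivotIndex s (P i) i) ∧ (∀ i, (P i i).Monic) ∧
    ∀ i j, i ≠ j → (P i j).degree < (P j j).degree

/-- `p` is an interpolant for `(E, J)`: `∑ i, (row i of E) ⋅ (p i)(J) = 0`. -/
def IsInterpolant {K : Type*} [Field K] {ι n : Type*} [Fintype ι] [Fintype n] [DecidableEq n]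
    (E : Matrix ι n K) (J : Matrix n n K) (p : ι → Polynomial K) : Prop :=
  ∑ i, Matrix.vecMul (E i) (Polynomial.aeval J (p i)) = 0

/-- `P` is an interpolation basis for `(E, J)`: its rows form a basis of the
`K[X]`-module of interpolants for `(E, J)`. -/
def IsInterpolationBasis {K : Type*} [Field K] {ι n : Type*} [Fintype ι] [Fintype n]
    [DecidableEq n] (E : Matrix ι n K) (J : Matrix n n K)
    (P : Matrix ι ι (Polynomial K)) : Prop :=
  LinearIndependent (Polynomial K) (fun i => P i) ∧
    (Submodule.span (Polynomial K) (Set.range fun i => P i) : Set (ι → Polynomial K))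
      = {p | IsInterpolant E J p}

/-- The product `Q ⋅ E`: the matrix over `K` whose `i`-th row is `∑ j, (E j) ⋅ (Q i j)(J)`. -/
noncomputable def polMulMat {K : Type*} [Field K] {κ ι n : Type*} [Fintype κ] [Fintype ι]
    [Fintype n] [DecidableEq n]
    (Q : Matrix κ ι (Polynomial K)) (E : Matrix ι n K) (J : Matrix n n K) : Matrix κ n K :=
  fun i => ∑ j, Matrix.vecMul (E j) (Polynomial.aeval J (Q i j))

/-- The `s`-leading matrix of `R`: if row `i` has `s`-degree `d`, its `(i,j)` entry is
the coefficient of degree `d - s j` in `R i j` (and `0` if row `i` is zero). -/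
noncomputable def leadingMatrix {K : Type*} [Field K] {ι : Type*} [Fintype ι]
    (s : ι → ℤ) (R : Matrix ι ι (Polynomial K)) : Matrix ι ι K := fun i j =>
  WithBot.recBotCoe 0
    (fun d => if 0 ≤ d - s j then (R i j).coeff (d - s j).toNat else 0)
    (sdeg s (R i))

/-!
Predictable degree property. Let `p` be a row of `P2` with `t`-degree `d`. The `j`-th entry of
`p * P1` is `∑ k, p k * P1 k j`, whose summands have degree at most `(d - t k) + (t k - s j)`,
so its coefficient of degree `d - s j` is the `j`-th entry of `lm_t(p) * lm_s(P1)`. This row is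
nonzero since `lm_t(p) ≠ 0` and `lm_s(P1)` is invertible, so the bound `d` on the `s`-degree of
`p * P1` is attained, and the leading coefficients are read off that row.
-/
lemma add_coe_le_coe_iff (a : WithBot ℤ) (b c : ℤ) :
    a + c ≤ b ↔ a ≤ ((b - c : ℤ) : WithBot ℤ) := by
  cases a with
  | bot => simp
  | coe a => norm_cast; omega

section

variable {K : Type*} [Field K]

section DegZ

noncomputable def coeffZ (p : K[X]) (n : ℤ) : K :=
  if 0 ≤ n then p.coeff n.toNat else 0

lemma degZ_eq_natDegree {p : K[X]} (hp : p ≠ 0) :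
    degZ p = ((p.natDegree : ℤ) : WithBot ℤ) := by
  rw [degZ, degree_eq_natDegree hp, Nat.cast_withBot, WithBot.map_coe]

lemma degZ_eq_bot_iff {p : K[X]} : degZ p = ⊥ ↔ p = 0 := by
  simp [degZ]

lemma degZ_add_le (p q : K[X]) : degZ (p + q) ≤ max (degZ p) (degZ q) := by
  have hmono : Monotone (WithBot.map (Nat.cast : ℕ → ℤ)) :=
    WithBot.monotone_map_iff.mpr Nat.mono_cast
  exact (hmono (degree_add_le p q)).trans_eq hmono.map_max

lemma degZ_sum_le {ι : Type*} (S : Finset ι) (f : ι → K[X]) {a : WithBot ℤ}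
    (h : ∀ k ∈ S, degZ (f k) ≤ a) : degZ (∑ k ∈ S, f k) ≤ a :=
  Finset.sum_induction f (degZ · ≤ a)
    (fun p q hp hq => (degZ_add_le p q).trans (max_le hp hq))
    ((degZ_eq_bot_iff.mpr rfl).trans_le bot_le) h

lemma degZ_mul (p q : K[X]) : degZ (p * q) = degZ p + degZ q := by
  by_cases hp : p = 0
  · simp [hp, degZ_eq_bot_iff.mpr]
  by_cases hq : q = 0
  · simp [hq, degZ_eq_bot_iff.mpr]
  rw [degZ_eq_natDegree (mul_ne_zero hp hq), degZ_eq_natDegree hp, degZ_eq_natDegree hq,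
    natDegree_mul hp hq]
  push_cast
  rfl

lemma natDegree_le_of_degZ_le {p : K[X]} {e : ℤ} (hp : p ≠ 0) (h : degZ p ≤ e) :
    (p.natDegree : ℤ) ≤ e := by
  rwa [degZ_eq_natDegree hp, WithBot.coe_le_coe] at h

lemma coeffZ_sum {ι : Type*} (S : Finset ι) (f : ι → K[X]) (n : ℤ) :
    coeffZ (∑ k ∈ S, f k) n = ∑ k ∈ S, coeffZ (f k) n := by
  unfold coeffZ
  split_ifs <;> simp

lemma coeffZ_mul_add_of_degZ_le {p q : K[X]} {e f : ℤ} (he : degZ p ≤ e) (hf : degZ q ≤ f) :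
    coeffZ (p * q) (e + f) = coeffZ p e * coeffZ q f := by
  by_cases hp : p = 0
  · simp [hp, coeffZ]
  by_cases hq : q = 0
  · simp [hq, coeffZ]
  have hpe := natDegree_le_of_degZ_le hp he
  have hqf := natDegree_le_of_degZ_le hq hf
  rw [coeffZ, coeffZ, coeffZ, if_pos (by omega), if_pos (by omega), if_pos (by omega),
    show (e + f).toNat = e.toNat + f.toNat by omega]
  exact coeff_mul_add_eq_of_natDegree_le (by omega) (by omega)

lemma le_degZ_of_coeffZ_ne_zero {p : K[X]} {n : ℤ} (h : coeffZ p n ≠ 0) :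
    (n : WithBot ℤ) ≤ degZ p := by
  unfold coeffZ at h
  split_ifs at h with hn
  · have hp : p ≠ 0 := by rintro rfl; simp at h
    rw [degZ_eq_natDegree hp, WithBot.coe_le_coe]
    have := le_natDegree_of_ne_zero h
    omega
  · exact absurd rfl h

lemma coeffZ_ne_zero_of_degZ_eq {p : K[X]} {n : ℤ} (h : degZ p = n) : coeffZ p n ≠ 0 := by
  have hp : p ≠ 0 := by rintro rfl; simp [degZ_eq_bot_iff.mpr] at h
  rw [degZ_eq_natDegree hp, WithBot.coe_inj] at h
  subst h
  simpa [coeffZ] using hp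

end DegZ

section ShiftedDegree

variable {ι : Type*} [Fintype ι]

noncomputable def leadingVec (s : ι → ℤ) (p : ι → K[X]) : ι → K := fun j =>
  WithBot.recBotCoe 0 (fun d => coeffZ (p j) (d - s j)) (sdeg s p)

lemma leadingMatrix_apply (s : ι → ℤ) (R : Matrix ι ι K[X]) (i : ι) :
    leadingMatrix s R i = leadingVec s (R i) :=
  rfl

variable {s : ι → ℤ} {p : ι → K[X]}

lemma leadingVec_of_sdeg_eq {d : ℤ} (h : sdeg s p = d) :
    leadingVec s p = fun j => coeffZ (p j) (d - s j) := by
  funext j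
  rw [leadingVec, h]
  rfl

lemma sdeg_le_iff {d : ℤ} :
    sdeg s p ≤ d ↔ ∀ j, degZ (p j) ≤ ((d - s j : ℤ) : WithBot ℤ) := by
  simp only [sdeg, Finset.sup_le_iff, Finset.mem_univ, true_implies, add_coe_le_coe_iff]

lemma sdeg_eq_bot_iff : sdeg s p = ⊥ ↔ p = 0 := by
  simp [sdeg, WithBot.add_eq_bot, degZ_eq_bot_iff, funext_iff]

lemma leadingVec_zero : leadingVec s (0 : ι → K[X]) = 0 := by
  funext j
  rw [leadingVec, sdeg_eq_bot_iff.mpr rfl]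
  rfl

lemma exists_degZ_eq_of_sdeg_eq {d : ℤ} (h : sdeg s p = d) :
    ∃ j, degZ (p j) = ((d - s j : ℤ) : WithBot ℤ) := by
  have hne : (Finset.univ : Finset ι).Nonempty := by
    by_contra hempty
    rw [Finset.not_nonempty_iff_eq_empty] at hempty
    simp [sdeg, hempty] at h
  obtain ⟨j, -, hj⟩ := Finset.exists_mem_eq_sup _ hne fun j => degZ (p j) + s j
  have hjd : degZ (p j) + s j = d := hj.symm.trans h
  refine ⟨j, ?_⟩
  cases hdeg : degZ (p j) with
  | bot => simp [hdeg] at hjd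
  | coe e => rw [hdeg] at hjd; norm_cast at hjd ⊢; omega

lemma leadingVec_ne_zero {d : ℤ} (h : sdeg s p = d) : leadingVec s p ≠ 0 := by
  obtain ⟨j, hj⟩ := exists_degZ_eq_of_sdeg_eq h
  intro h0
  have := congrFun h0 j
  rw [leadingVec_of_sdeg_eq h] at this
  exact coeffZ_ne_zero_of_degZ_eq hj this

end ShiftedDegree

section PredictableDegree

variable {ι : Type*} [Fintype ι] {s t : ι → ℤ} {P : Matrix ι ι K[X]}

lemma sdeg_vecMul_le {p : ι → K[X]} {d : ℤ} (hp : sdeg t p ≤ d)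
    (hP : ∀ k, sdeg s (P k) ≤ t k) : sdeg s (p ᵥ* P) ≤ d := by
  rw [sdeg_le_iff] at hp ⊢
  intro j
  refine degZ_sum_le _ _ fun k _ => ?_
  calc degZ (p k * P k j) = degZ (p k) + degZ (P k j) := degZ_mul _ _
    _ ≤ ((d - t k : ℤ) : WithBot ℤ) + ((t k - s j : ℤ) : WithBot ℤ) :=
      add_le_add (hp k) (sdeg_le_iff.mp (hP k) j)
    _ = ((d - s j : ℤ) : WithBot ℤ) := by norm_cast; ring_nf

lemma coeffZ_vecMul {p : ι → K[X]} {d : ℤ} (hp : sdeg t p = d)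
    (hP : ∀ k, sdeg s (P k) = t k) (j : ι) :
    coeffZ ((p ᵥ* P) j) (d - s j) = (leadingVec t p ᵥ* leadingMatrix s P) j := by
  simp only [vecMul, dotProduct, coeffZ_sum, leadingMatrix_apply, leadingVec_of_sdeg_eq hp,
    leadingVec_of_sdeg_eq (hP _)]
  refine Finset.sum_congr rfl fun k _ => ?_
  rw [show d - s j = (d - t k) + (t k - s j) by ring]
  exact coeffZ_mul_add_of_degZ_le (sdeg_le_iff.mp hp.le k) (sdeg_le_iff.mp (hP k).le j)

variable [DecidableEq ι]

theorem sdeg_vecMul (hP : ∀ k, sdeg s (P k) = t k) (hred : (leadingMatrix s P).det ≠ 0)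
    (p : ι → K[X]) : sdeg s (p ᵥ* P) = sdeg t p := by
  cases hp : sdeg t p with
  | bot => simp [sdeg_eq_bot_iff.mp hp, sdeg_eq_bot_iff]
  | coe d =>
    refine le_antisymm (sdeg_vecMul_le hp.le fun k => (hP k).le) ?_
    have hlm : leadingVec t p ᵥ* leadingMatrix s P ≠ 0 := fun h0 =>
      hred (exists_vecMul_eq_zero_iff.mp ⟨_, leadingVec_ne_zero hp, h0⟩)
    obtain ⟨j, hj⟩ := Function.ne_iff.mp hlm
    rw [← coeffZ_vecMul hp hP] at hj
    calc (d : WithBot ℤ) = ((d - s j : ℤ) : WithBot ℤ) + s j := by norm_cast; ring_nf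
      _ ≤ degZ ((p ᵥ* P) j) + s j := add_le_add_left (le_degZ_of_coeffZ_ne_zero hj) _
      _ ≤ sdeg s (p ᵥ* P) :=
        Finset.le_sup (f := fun j => degZ ((p ᵥ* P) j) + s j) (Finset.mem_univ j)

theorem leadingVec_vecMul (hP : ∀ k, sdeg s (P k) = t k) (hred : (leadingMatrix s P).det ≠ 0)
    (p : ι → K[X]) : leadingVec s (p ᵥ* P) = leadingVec t p ᵥ* leadingMatrix s P := by
  cases hp : sdeg t p with
  | bot => simp [sdeg_eq_bot_iff.mp hp, leadingVec_zero]
  | coe d =>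
    rw [leadingVec_of_sdeg_eq ((sdeg_vecMul hP hred p).trans hp)]
    exact funext (coeffZ_vecMul hp hP)

end PredictableDegree

end

theorem rdeg_and_leadingMatrix_mul_general {K : Type*} [Field K] {m : ℕ}
    (s : Fin m → ℤ) (P1 P2 : Matrix (Fin m) (Fin m) (Polynomial K)) (t : Fin m → ℤ)
    (h1red : (leadingMatrix s P1).det ≠ 0)
    (ht : ∀ i, sdeg s (P1 i) = (t i : WithBot ℤ)) :
    (∀ i, sdeg s ((P2 * P1) i) = sdeg t (P2 i)) ∧
      leadingMatrix s (P2 * P1) = leadingMatrix t P2 * leadingMatrix s P1 :=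
  ⟨fun i => sdeg_vecMul ht h1red (P2 i), funext fun i => leadingVec_vecMul ht h1red (P2 i)⟩

/-- predictable degree / leading matrix of a product. If `P1` is
nonsingular and `s`-reduced with `s`-row degree `t`, and `P2` is nonsingular and
`t`-reduced, then `rdeg_s(P2 P1) = rdeg_t(P2)` and
`lm_s(P2 P1) = lm_t(P2) ⋅ lm_s(P1)`. -/
theorem rdeg_and_leadingMatrix_mul {K : Type*} [Field K] {m : ℕ} (hm : 1 ≤ m)
    (s : Fin m → ℤ) (P1 P2 : Matrix (Fin m) (Fin m) (Polynomial K)) (t : Fin m → ℤ)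
    (h1det : P1.det ≠ 0) (h1red : (leadingMatrix s P1).det ≠ 0)
    (ht : ∀ i, sdeg s (P1 i) = (t i : WithBot ℤ))
    (h2det : P2.det ≠ 0) (h2red : (leadingMatrix t P2).det ≠ 0) :
    (∀ i, sdeg s ((P2 * P1) i) = sdeg t (P2 i)) ∧
      leadingMatrix s (P2 * P1) = leadingMatrix t P2 * leadingMatrix s P1 :=
  rdeg_and_leadingMatrix_mul_general s P1 P2 t h1red ht
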